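/- Let n ≥ 1, 1 ≤ k ≤ n, 1 ≤ i ≤ n, and let r₁, …, r_n be real numbers. Then the polynomial σ_k(r+tI), which has degree k in t, has only real roots (splits over ℝ), and the polynomial q_{i,k}(t), which has degree k−1 in t, has only real roots (splits over ℝ). -/

import Mathlib

open Polynomial

/-- `σ_m(r+tI) = Σ_{1≤i₁<…<i_m≤n} (t+r_{i₁})⋯(t+r_{i_m})` as a real polynomial in `t`. -/
noncomputable def sigmaTP (n : ℕ) (r : Fin n → ℝ) (m : ℕ) : Polynomial ℝ :=
  ∑ s ∈ Finset.powersetCard m (Finset.univ : Finset (Fin n)),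
    ∏ i ∈ s, (X + C (r i))

/-- `q_{i,k}(t) = Σ_{j=0}^{k−1} (−1)^j σ_{k−1−j}(r+tI) (t+r_i)^j`. -/
noncomputable def qPoly (n : ℕ) (r : Fin n → ℝ) (i : Fin n) (k : ℕ) : Polynomial ℝ :=
  ∑ j ∈ Finset.range k, ((-1 : ℝ) ^ j) • (sigmaTP n r (k - 1 - j) * (X + C (r i)) ^ j)

/-- `p_{k+1}(t) = (r₀₀ + t) σ_k(r+tI) − Σ_{i=1}^n q_{i,k}(t) x_i²`. -/
noncomputable def pPoly (n k : ℕ) (r₀₀ : ℝ) (r : Fin n → ℝ) (x : Fin n → ℝ) :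
    Polynomial ℝ :=
  (X + C r₀₀) * sigmaTP n r k - ∑ i : Fin n, ((x i) ^ 2) • qPoly n r i k

/-- `π_n(t) = (t+r₁)⋯(t+r_n)`. -/
noncomputable def piN (n : ℕ) (r : Fin n → ℝ) : Polynomial ℝ :=
  ∏ i : Fin n, (X + C (r i))

/-- `π_{i,n}(t) = ∏_{j≠i} (t+r_j)`. -/
noncomputable def piIN (n : ℕ) (r : Fin n → ℝ) (i : Fin n) : Polynomial ℝ :=
  ∏ j ∈ Finset.univ.erase i, (X + C (r j))

/-!
For a multiset `s` of scalars put `π(t) = ∏_{a ∈ s} (t + a)`. Expanding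
`π(t + y) = ∏_{a ∈ s} (y + (t + a))` in powers of `y` (Vieta) shows that `σ_m` of the shifted
family `(t + a)_{a ∈ s}` is the Hasse derivative `π^{(|s| - m)} / (|s| - m)!`. Over `ℝ`, Rolle's
theorem makes derivatives of real-rooted polynomials real-rooted, and a Hasse derivative of order
`j` lowers the degree by exactly `j`. Splitting the factor `t + r_i` off `σ_m(r + tI)` makes the
alternating sum defining `q_{i,k}` telescope to `σ_{k-1}` of the other `n - 1` numbers.
-/

namespace Multiset

theorem esymm_cons_succ {R : Type*} [CommSemiring R] (a : R) (s : Multiset R) (m : ℕ) :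
    (a ::ₘ s).esymm (m + 1) = s.esymm (m + 1) + a * s.esymm m := by
  simp [esymm, map_map, sum_map_mul_left]

end Multiset

namespace Polynomial

theorem hasseDeriv_map {R S : Type*} [Semiring R] [Semiring S] (f : R →+* S) (k : ℕ)
    (p : R[X]) : hasseDeriv k (p.map f) = (hasseDeriv k p).map f := by
  ext n
  simp [hasseDeriv_coeff, coeff_map]

section CommSemiring

variable {R : Type*} [CommSemiring R]

theorem esymm_map_X_add_C_eq_hasseDeriv (s : Multiset R) {m : ℕ} (hm : m ≤ Multiset.card s) :
    (s.map fun a => X + C a).esymm m =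
      hasseDeriv (Multiset.card s - m) (s.map fun a => X + C a).prod := by
  have hcoeff := Multiset.prod_X_add_C_coeff (s.map fun a => X + C a)
    (k := Multiset.card s - m) (by simp)
  have htaylor : ((s.map fun a => X + C a).map fun p : R[X] => X + C p).prod =
      taylor (X : R[X]) ((s.map fun a => X + C a).prod.map (C : R →+* R[X])) := by
    simp [taylor_apply, Polynomial.map_multiset_prod, multiset_prod_comp, add_assoc]
  rw [Multiset.card_map, Nat.sub_sub_self hm, htaylor, taylor_coeff, hasseDeriv_map, eval_map,
    eval₂_C_X] at hcoeff
  exact hcoeff.symm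

theorem natDegree_esymm_map_X_add_C [Nontrivial R] [IsAddTorsionFree R] (s : Multiset R) {m : ℕ}
    (hm : m ≤ Multiset.card s) : ((s.map fun a => X + C a).esymm m).natDegree = m := by
  have hprod : (s.map fun a => X + C a).prod.natDegree = Multiset.card s := by
    rw [natDegree_multiset_prod_of_monic _ (by simp [monic_X_add_C])]
    simp
  rw [esymm_map_X_add_C_eq_hasseDeriv s hm, natDegree_hasseDeriv, hprod, Nat.sub_sub_self hm]

end CommSemiring

theorem Splits.derivative {p : ℝ[X]} (hp : p.Splits) : p.derivative.Splits := by
  rw [splits_iff_card_roots] at hp ⊢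
  have hrolle := card_roots_le_derivative p
  have hroots := card_roots' p.derivative
  have hdeg := natDegree_derivative_le p
  omega

open Nat in
theorem Splits.hasseDeriv {p : ℝ[X]} (hp : p.Splits) (k : ℕ) : (hasseDeriv k p).Splits := by
  have hiter : (Polynomial.derivative^[k] p).Splits := by
    induction k with
    | zero => exact hp
    | succ k ih => rw [Function.iterate_succ_apply']; exact ih.derivative
  have hfac : (k ! : ℝ) ≠ 0 := by positivity
  have hD : Polynomial.derivative^[k] p = C (k ! : ℝ) * Polynomial.hasseDeriv k p := by
    rw [← factorial_smul_hasseDeriv, LinearMap.smul_apply, ← Nat.cast_smul_eq_nsmul ℝ,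
      smul_eq_C_mul]
  have := hiter.C_mul (k ! : ℝ)⁻¹
  rwa [hD, ← mul_assoc, ← C_mul, inv_mul_cancel₀ hfac, C_1, one_mul] at this

theorem splits_esymm_map_X_add_C (s : Multiset ℝ) (m : ℕ) :
    ((s.map fun a => X + C a).esymm m).Splits := by
  rcases le_or_gt m (Multiset.card s) with hm | hm
  · rw [esymm_map_X_add_C_eq_hasseDeriv s hm]
    exact (Splits.multisetProd (by simp [Splits.X_add_C])).hasseDeriv _
  · simp [Multiset.esymm, hm]

end Polynomial

theorem sigmaTP_eq_esymm (n : ℕ) (r : Fin n → ℝ) (m : ℕ) :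
    sigmaTP n r m = ((Finset.univ.val.map r).map fun a => X + C a).esymm m := by
  rw [Multiset.map_map, Finset.esymm_map_val]
  rfl

theorem sigmaTP_succ_eq_esymm_erase (n : ℕ) (r : Fin n → ℝ) (i : Fin n) (m : ℕ) :
    sigmaTP n r (m + 1) =
      (((Finset.univ.erase i).val.map r).map fun a => X + C a).esymm (m + 1) +
        (X + C (r i)) * (((Finset.univ.erase i).val.map r).map fun a => X + C a).esymm m := by
  have hsplit : Finset.univ.val.map r = r i ::ₘ (Finset.univ.erase i).val.map r := by
    rw [Finset.erase_val, ← Multiset.map_cons, Multiset.cons_erase (Finset.mem_univ_val i)]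
  rw [sigmaTP_eq_esymm, hsplit, Multiset.map_cons, Multiset.esymm_cons_succ]

theorem qPoly_succ (n : ℕ) (r : Fin n → ℝ) (i : Fin n) (k : ℕ) :
    qPoly n r i (k + 1) = sigmaTP n r k - (X + C (r i)) * qPoly n r i k := by
  rw [qPoly, qPoly, Finset.sum_range_succ', Finset.mul_sum, sub_eq_neg_add,
    ← Finset.sum_neg_distrib]
  refine congrArg₂ (· + ·) ?_ ?_
  · refine Finset.sum_congr rfl fun j _ => ?_
    rw [show k + 1 - 1 - (j + 1) = k - 1 - j by omega]
    simp only [smul_eq_C_mul, map_pow, map_neg, map_one]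
    ring
  · simp

theorem qPoly_succ_eq_esymm_erase (n : ℕ) (r : Fin n → ℝ) (i : Fin n) (k : ℕ) :
    qPoly n r i (k + 1) = (((Finset.univ.erase i).val.map r).map fun a => X + C a).esymm k := by
  induction k with
  | zero => simp [qPoly, sigmaTP, Multiset.esymm]
  | succ k ih => rw [qPoly_succ, ih, sigmaTP_succ_eq_esymm_erase]; ring

theorem sigmaTP_and_qPoly_real_rooted_general (n k : ℕ) (hk1 : 1 ≤ k) (hkn : k ≤ n)
    (i : Fin n) (r : Fin n → ℝ) :
    (sigmaTP n r k).natDegree = k ∧ (sigmaTP n r k).Splits ∧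
      (qPoly n r i k).natDegree = k - 1 ∧ (qPoly n r i k).Splits := by
  obtain ⟨k, rfl⟩ : ∃ j, k = j + 1 := ⟨k - 1, by omega⟩
  rw [sigmaTP_eq_esymm, qPoly_succ_eq_esymm_erase]
  exact ⟨natDegree_esymm_map_X_add_C _ (by simpa using hkn), splits_esymm_map_X_add_C _ _,
    natDegree_esymm_map_X_add_C _ (by simp; omega), splits_esymm_map_X_add_C _ _⟩

/-- `σ_k(r+tI)` has degree `k` and only real roots, and `q_{i,k}`
has degree `k−1` and only real roots. -/
theorem sigmaTP_and_qPoly_real_rooted (n k : ℕ) (hn : 1 ≤ n) (hk1 : 1 ≤ k) (hkn : k ≤ n)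
    (i : Fin n) (r : Fin n → ℝ) :
    (sigmaTP n r k).natDegree = k ∧ (sigmaTP n r k).Splits ∧
      (qPoly n r i k).natDegree = k - 1 ∧ (qPoly n r i k).Splits :=
  sigmaTP_and_qPoly_real_rooted_general n k hk1 hkn i r
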